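/- For every integer n ≥ 2 and every integer r with 3 < r ≤ n+1, the (n+1)-dimensional n-ary Filippov algebra D_r degenerates to D_{r−1}; that is, the structure of D_{r−1} lies in the closure of the GL(V)-orbit of the structure of D_r. -/

import Mathlib

open Function Submodule

/-! Common framework: `V = ℂ^{n+1}`, `n`-ary multiplications as functions
`(Fin n → V) → V`, the action of `GL(V)` on them, orbits, and the
(n+1)-dimensional n-ary Filippov algebras of Kaygorodov–Volkov, each described
as an alternating `n`-linear map by its values on the increasing tuples of
distinct standard basis vectors (0-indexed: `bt n j` is the tuple omitting `e j`). -/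

/-- The underlying space `V = ℂ^{n+1}`. -/
abbrev nV (n : ℕ) : Type := Fin (n + 1) → ℂ

/-- The `j`-th standard basis vector of `V` (0-indexed). -/
def sb (n : ℕ) (j : Fin (n + 1)) : nV n := Pi.single j 1

/-- The increasing `n`-tuple of standard basis vectors omitting `e j`. -/
def bt (n : ℕ) (j : Fin (n + 1)) : Fin n → nV n := fun k => sb n (j.succAbove k)

/-- The action of `GL(V)` (invertible linear maps) on `n`-ary multiplications:
`(g • μ)(x₁, …, xₙ) = g (μ (g⁻¹ x₁, …, g⁻¹ xₙ))`. -/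
noncomputable def glAct (n : ℕ) (g : nV n ≃ₗ[ℂ] nV n) (μ : (Fin n → nV n) → nV n) :
    (Fin n → nV n) → nV n :=
  fun x => g (μ fun i => g.symm (x i))

/-- The `GL(V)`-orbit of an `n`-ary multiplication. -/
def glOrbit (n : ℕ) (μ : (Fin n → nV n) → nV n) : Set ((Fin n → nV n) → nV n) :=
  {ν | ∃ g : nV n ≃ₗ[ℂ] nV n, ν = glAct n g μ}

/-- The algebra `B`: `[e₂, …, e_{n+1}] = e₁` (0-indexed: the tuple omitting `e 0`
maps to `e 0`), all other increasing basis products zero. -/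
def IsB (n : ℕ) (μ : AlternatingMap ℂ (nV n) (nV n) (Fin n)) : Prop :=
  μ (bt n 0) = sb n 0 ∧ ∀ j : Fin (n + 1), j ≠ 0 → μ (bt n j) = 0

/-- The algebra `C₁`: `[e₂, …, e_{n+1}] = e₁`, `[e₁, e₃, …, e_{n+1}] = e₂`. -/
def IsC1 (n : ℕ) (μ : AlternatingMap ℂ (nV n) (nV n) (Fin n)) : Prop :=
  μ (bt n 0) = sb n 0 ∧ μ (bt n 1) = sb n 1 ∧
    ∀ j : Fin (n + 1), j ≠ 0 → j ≠ 1 → μ (bt n j) = 0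

/-- The algebra `C₂(α)`: `[e₂, …, e_{n+1}] = α e₁ + e₂`, `[e₁, e₃, …, e_{n+1}] = e₂`. -/
def IsC2 (n : ℕ) (α : ℂ) (μ : AlternatingMap ℂ (nV n) (nV n) (Fin n)) : Prop :=
  μ (bt n 0) = α • sb n 0 + sb n 1 ∧ μ (bt n 1) = sb n 1 ∧
    ∀ j : Fin (n + 1), j ≠ 0 → j ≠ 1 → μ (bt n j) = 0

/-- The algebra `C₃`: `[e₁, e₃, …, e_{n+1}] = e₁`, `[e₂, e₃, …, e_{n+1}] = e₂`. -/
def IsC3 (n : ℕ) (μ : AlternatingMap ℂ (nV n) (nV n) (Fin n)) : Prop :=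
  μ (bt n 1) = sb n 0 ∧ μ (bt n 0) = sb n 1 ∧
    ∀ j : Fin (n + 1), j ≠ 0 → j ≠ 1 → μ (bt n j) = 0

/-- The algebra `D_r`: `[e₁, …, e_{i-1}, e_{i+1}, …, e_{n+1}] = e_i` for `1 ≤ i ≤ r`
(0-indexed: the tuple omitting `e j` maps to `e j` for `j < r` and to `0` otherwise). -/
def IsD (n r : ℕ) (μ : AlternatingMap ℂ (nV n) (nV n) (Fin n)) : Prop :=
  ∀ j : Fin (n + 1), ((j : ℕ) < r → μ (bt n j) = sb n j) ∧ (r ≤ (j : ℕ) → μ (bt n j) = 0)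

/-! Conjugate by the diagonal automorphism with weight `t ^ (n - 2)` on `e (r - 1)` and `t⁻¹` on
every other basis vector. It rescales the product of the tuple omitting `e j` by
`(weight of e j) ^ 2 / (product of all weights)`, which is `1` for `j ≠ r - 1` and `t ^ (2n - 2)`
for `j = r - 1`. Hence the conjugate of `D_r` is `D_{r-1} + t ^ (2n - 2) • (D_r - D_{r-1})`, which
tends to `D_{r-1}` as `t → 0`. -/

open Filter Topology

theorem alternatingMap_ext_bt {n : ℕ} {f g : AlternatingMap ℂ (nV n) (nV n) (Fin n)}
    (h : ∀ j, f (bt n j) = g (bt n j)) : f = g := by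
  refine Module.Basis.ext_alternating (Pi.basisFun ℂ (Fin (n + 1))) fun v hv => ?_
  obtain ⟨j, hj⟩ : ∃ j, ∀ i, v i ≠ j := by
    by_contra! hsurj
    simpa using Fintype.card_le_of_surjective v hsurj
  choose w hw using fun i => Fin.exists_succAbove_eq (hj i)
  have hw_inj : Injective w := fun a b hab => hv (by rw [← hw a, ← hw b, hab])
  let σ : Equiv.Perm (Fin n) := Equiv.ofBijective w hw_inj.bijective_of_finite
  have hv_eq : (fun i => Pi.basisFun ℂ (Fin (n + 1)) (v i)) = bt n j ∘ σ := by
    ext i : 1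
    simp [bt, sb, σ, hw]
  rw [hv_eq, f.map_perm, g.map_perm, h j]

noncomputable def diagEquiv (n : ℕ) (u : Fin (n + 1) → ℂˣ) : nV n ≃ₗ[ℂ] nV n :=
  LinearEquiv.piCongrRight fun k => LinearEquiv.smulOfUnit (u k)

theorem diagEquiv_sb (n : ℕ) (u : Fin (n + 1) → ℂˣ) (j : Fin (n + 1)) :
    diagEquiv n u (sb n j) = (u j : ℂ) • sb n j := by
  ext k
  rcases eq_or_ne k j with rfl | hkj
  · simp [diagEquiv, sb, LinearEquiv.smulOfUnit, Units.smul_def]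
  · simp [diagEquiv, sb, LinearEquiv.smulOfUnit, hkj]

theorem diagEquiv_symm (n : ℕ) (u : Fin (n + 1) → ℂˣ) : (diagEquiv n u).symm = diagEquiv n u⁻¹ :=
  rfl

theorem glAct_diagEquiv_bt (n : ℕ) (u : Fin (n + 1) → ℂˣ)
    (μ : AlternatingMap ℂ (nV n) (nV n) (Fin n)) (j : Fin (n + 1)) :
    glAct n (diagEquiv n u) μ (bt n j) =
      ((∏ i, (u (j.succAbove i))⁻¹ : ℂˣ) : ℂ) • diagEquiv n u (μ (bt n j)) := by
  have h : (fun i => (diagEquiv n u).symm (bt n j i)) =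
      fun i => (((u (j.succAbove i))⁻¹ : ℂˣ) : ℂ) • bt n j i := by
    ext i : 1
    rw [diagEquiv_symm, bt, diagEquiv_sb]
    rfl
  rw [glAct, h, μ.map_smul_univ, map_smul, Units.coe_prod]

theorem glAct_eq_of_bt {n : ℕ} (g : nV n ≃ₗ[ℂ] nV n)
    {μ ν : AlternatingMap ℂ (nV n) (nV n) (Fin n)}
    (h : ∀ j, glAct n g μ (bt n j) = ν (bt n j)) : glAct n g μ = ν :=
  congrArg DFunLike.coe
    (alternatingMap_ext_bt (f := (g : nV n →ₗ[ℂ] nV n).compAlternatingMap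
      (μ.compLinearMap (g.symm : nV n →ₗ[ℂ] nV n))) h)

theorem IsD.diagEquiv_apply_bt {n r : ℕ} {μ : AlternatingMap ℂ (nV n) (nV n) (Fin n)}
    (hμ : IsD n r μ) (u : Fin (n + 1) → ℂˣ) (j : Fin (n + 1)) :
    diagEquiv n u (μ (bt n j)) = (u j : ℂ) • μ (bt n j) := by
  rcases lt_or_ge (j : ℕ) r with hj | hj
  · rw [(hμ j).1 hj, diagEquiv_sb]
  · rw [(hμ j).2 hj, map_zero, smul_zero]

theorem glAct_diagEquiv_bt_of_isD {n r : ℕ} {μ : AlternatingMap ℂ (nV n) (nV n) (Fin n)}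
    (hμ : IsD n r μ) (u : Fin (n + 1) → ℂˣ) (j : Fin (n + 1)) :
    glAct n (diagEquiv n u) μ (bt n j) = ((u j ^ 2 * (∏ k, u k)⁻¹ : ℂˣ) : ℂ) • μ (bt n j) := by
  rw [glAct_diagEquiv_bt, hμ.diagEquiv_apply_bt, smul_smul, ← Units.val_mul,
    Fin.prod_univ_succAbove _ j, Finset.prod_inv_distrib]
  congr 2
  rw [mul_inv, pow_two, mul_assoc, mul_inv_cancel_left, mul_comm]

theorem IsD.apply_bt_of_ne_sub_one {n r : ℕ} {μ ν : AlternatingMap ℂ (nV n) (nV n) (Fin n)}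
    (hμ : IsD n r μ) (hν : IsD n (r - 1) ν) {j : Fin (n + 1)} (hj : (j : ℕ) ≠ r - 1) :
    ν (bt n j) = μ (bt n j) := by
  rcases lt_or_ge (j : ℕ) r with hjr | hjr
  · rw [(hν j).1 (by omega), (hμ j).1 hjr]
  · rw [(hν j).2 (by omega), (hμ j).2 hjr]

def degenWeights (n : ℕ) (j₀ : Fin (n + 1)) (t : ℂˣ) : Fin (n + 1) → ℂˣ :=
  update (fun _ => t⁻¹) j₀ (t ^ (n - 2))

theorem prod_degenWeights {n : ℕ} (hn : 2 ≤ n) (j₀ : Fin (n + 1)) (t : ℂˣ) :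
    ∏ k, degenWeights n j₀ t k = t⁻¹ ^ 2 := by
  rw [Fin.prod_univ_succAbove _ j₀]
  simp only [degenWeights, update_self, update_of_ne (Fin.succAbove_ne j₀ _),
    Finset.prod_const, Finset.card_univ, Fintype.card_fin]
  obtain ⟨m, rfl⟩ := Nat.exists_eq_add_of_le' hn
  rw [Nat.add_sub_cancel, pow_add, ← mul_assoc, ← mul_pow, mul_inv_cancel, one_pow, one_mul]

theorem degenWeights_sq_mul_prod_inv {n : ℕ} (hn : 2 ≤ n) (j₀ j : Fin (n + 1)) (t : ℂˣ) :
    degenWeights n j₀ t j ^ 2 * (∏ k, degenWeights n j₀ t k)⁻¹ =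
      if j = j₀ then t ^ (2 * n - 2) else 1 := by
  rw [prod_degenWeights hn]
  obtain ⟨m, rfl⟩ := Nat.exists_eq_add_of_le' hn
  split_ifs with hj
  · rw [hj, degenWeights, update_self, Nat.add_sub_cancel,
      show 2 * (m + 2) - 2 = 2 * m + 2 by omega, inv_pow, inv_inv, ← pow_mul, ← pow_add, mul_comm]
  · rw [degenWeights, update_of_ne hj]
    exact mul_inv_cancel _

theorem glAct_degenWeights_of_isD {n r : ℕ} (hn : 2 ≤ n) (hrn : r ≤ n + 1)
    {μ ν : AlternatingMap ℂ (nV n) (nV n) (Fin n)} (hμ : IsD n r μ) (hν : IsD n (r - 1) ν)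
    (t : ℂˣ) :
    glAct n (diagEquiv n (degenWeights n ⟨r - 1, by omega⟩ t)) μ =
      ⇑(ν + ((t : ℂ) ^ (2 * n - 2)) • (μ - ν)) := by
  refine glAct_eq_of_bt _ fun j => ?_
  rw [glAct_diagEquiv_bt_of_isD hμ, degenWeights_sq_mul_prod_inv hn]
  split_ifs with hj
  · have hνj : ν (bt n j) = 0 := (hν j).2 (by rw [hj])
    simp [hνj]
  · have hνj := hμ.apply_bt_of_ne_sub_one hν fun h => hj (Fin.ext h)
    simp [hνj]

theorem Dr_degenerates_to_Dr_sub_one_general (n : ℕ) (hn : 2 ≤ n) (r : ℕ) (hrn : r ≤ n + 1)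
    (μ ν : AlternatingMap ℂ (nV n) (nV n) (Fin n)) (hμ : IsD n r μ) (hν : IsD n (r - 1) ν) :
    ⇑ν ∈ closure (glOrbit n ⇑μ) := by
  have hcont : Continuous fun t : ℂ => ⇑(ν + t ^ (2 * n - 2) • (μ - ν)) := by
    refine continuous_pi fun x => ?_
    simp only [AlternatingMap.add_apply, AlternatingMap.smul_apply]
    fun_prop
  have hlim : Tendsto (fun t : ℂ => ⇑(ν + t ^ (2 * n - 2) • (μ - ν))) (𝓝[≠] 0) (𝓝 ⇑ν) := by
    simpa [zero_pow (show 2 * n - 2 ≠ 0 by omega)] using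
      (hcont.tendsto 0).mono_left nhdsWithin_le_nhds
  refine mem_closure_of_tendsto hlim (eventually_nhdsWithin_of_forall fun t ht => ?_)
  exact ⟨_, (glAct_degenWeights_of_isD hn hrn hμ hν (Units.mk0 t ht)).symm⟩

/-- For every integer `n ≥ 2` and every `r` with `3 < r ≤ n+1`,
the algebra `D_r` degenerates to `D_{r-1}`. -/
theorem Dr_degenerates_to_Dr_sub_one (n : ℕ) (hn : 2 ≤ n) (r : ℕ) (hr : 3 < r) (hrn : r ≤ n + 1)
    (μ ν : AlternatingMap ℂ (nV n) (nV n) (Fin n)) (hμ : IsD n r μ) (hν : IsD n (r - 1) ν) :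
    ⇑ν ∈ closure (glOrbit n ⇑μ) :=
  Dr_degenerates_to_Dr_sub_one_general n hn r hrn μ ν hμ hν
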